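/- Let X be a real Banach space with dual X*, and let f : X → ℝ be continuous, convex, strictly convex, and Gâteaux differentiable with gradient ∇f : X → X*. Let C ⊆ X be a nonempty, closed and convex set and let T : C → C be Bregman quasi-nonexpansive with respect to f, that is, F(T) = {x ∈ C : Tx = x} ≠ ∅ and D_f(p, Tx) ≤ D_f(p, x) for all x ∈ C and p ∈ F(T). Then F(T) is a closed and convex subset of C. -/
import Mathlib


open Filter Topology

/-- The Bregman distance associated with `f` and its gradient map `gf`. -/
noncomputable def Df {X : Type*} [NormedAddCommGroup X] [NormedSpace ℝ X]
    (f : X → ℝ) (gf : X → X →L[ℝ] ℝ) (y x : X) : ℝ :=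
  f y - f x - gf x (y - x)

/-- The fixed point set of a self mapping `T` of `C`. -/
def FixPt {X : Type*} (T : X → X) (C : Set X) : Set X := {x ∈ C | T x = x}

/-- Subgradient inequality: the Gâteaux gradient of a convex function is a subgradient. -/
lemma subgrad_ineq {X : Type*} [NormedAddCommGroup X] [NormedSpace ℝ X]
    (f : X → ℝ) (gf : X → X →L[ℝ] ℝ)
    (hconv : ConvexOn ℝ Set.univ f)
    (hgf : ∀ p v : X, HasLineDerivAt ℝ f (gf p v) p v) (x y : X) :
    gf x (y - x) ≤ f y - f x := by
  set g : ℝ → ℝ := fun t => f (x + t • (y - x)) with hgdef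
  have hd : HasDerivAt g (gf x (y - x)) 0 := hgf x (y - x)
  have hgc : ConvexOn ℝ Set.univ g := by
    have h := hconv.comp_affineMap (AffineMap.lineMap x y)
    have : g = f ∘ (AffineMap.lineMap x y) := by
      funext t
      simp [hgdef, AffineMap.lineMap_apply, add_comm]
    rw [this]
    simpa using h
  have hslope : Tendsto (slope g 0) (𝓝[>] (0:ℝ)) (𝓝 (gf x (y - x))) :=
    (hasDerivAt_iff_tendsto_slope.1 hd).mono_left
      (nhdsWithin_mono _ (fun t ht => Set.mem_compl_singleton_iff.2 (ne_of_gt ht)))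
  have hev : ∀ᶠ t in 𝓝[>] (0:ℝ), slope g 0 t ≤ g 1 - g 0 := by
    filter_upwards [Ioo_mem_nhdsGT (by norm_num : (0:ℝ) < 1)] with t ht
    have h2 := hgc.secant_mono_aux2 (Set.mem_univ (0:ℝ)) (Set.mem_univ (1:ℝ)) ht.1 ht.2
    simpa [slope_def_field, div_eq_iff] using h2
  have hle : gf x (y - x) ≤ g 1 - g 0 := le_of_tendsto hslope hev
  simpa [hgdef] using hle

/-- The Bregman distance is nonnegative. -/
lemma Df_nonneg {X : Type*} [NormedAddCommGroup X] [NormedSpace ℝ X]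
    (f : X → ℝ) (gf : X → X →L[ℝ] ℝ)
    (hconv : ConvexOn ℝ Set.univ f)
    (hgf : ∀ p v : X, HasLineDerivAt ℝ f (gf p v) p v) (y x : X) :
    0 ≤ Df f gf y x := by
  have := subgrad_ineq f gf hconv hgf x y
  simp only [Df]
  linarith

/-- For strictly convex `f`, vanishing Bregman distance forces equality. -/
lemma Df_eq_zero_iff {X : Type*} [NormedAddCommGroup X] [NormedSpace ℝ X]
    (f : X → ℝ) (gf : X → X →L[ℝ] ℝ)
    (hconv : ConvexOn ℝ Set.univ f)
    (hstrict : StrictConvexOn ℝ Set.univ f)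
    (hgf : ∀ p v : X, HasLineDerivAt ℝ f (gf p v) p v) {y x : X}
    (h : Df f gf y x = 0) : y = x := by
  by_contra hne
  have hmid : f ((1/2 : ℝ) • y + (1/2 : ℝ) • x) < (1/2 : ℝ) * f y + (1/2 : ℝ) * f x :=
    hstrict.2 (Set.mem_univ y) (Set.mem_univ x) hne (by norm_num) (by norm_num) (by norm_num)
  set m : X := (1/2 : ℝ) • y + (1/2 : ℝ) • x with hm
  have hsub : gf x (m - x) ≤ f m - f x := subgrad_ineq f gf hconv hgf x m
  have hmx : m - x = (1/2 : ℝ) • (y - x) := by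
    rw [hm]; module
  have hval : gf x (m - x) = (1/2 : ℝ) * gf x (y - x) := by
    rw [hmx, map_smul]; simp
  have hDf : f y - f x - gf x (y - x) = 0 := h
  rw [hval] at hsub
  linarith

/-- The fixed point set of a Bregman quasi-nonexpansive self mapping of a nonempty
closed convex subset of a Banach space is closed and convex. -/
theorem fixedPointSet_closed_convex
    {X : Type*} [NormedAddCommGroup X] [NormedSpace ℝ X] [CompleteSpace X]
    (f : X → ℝ) (gf : X → X →L[ℝ] ℝ)
    (hcont : Continuous f)
    (hconv : ConvexOn ℝ Set.univ f)
    (hstrict : StrictConvexOn ℝ Set.univ f)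
    (hgf : ∀ p v : X, HasLineDerivAt ℝ f (gf p v) p v)
    (C : Set X) (hCne : C.Nonempty) (hCclosed : IsClosed C) (hCconv : Convex ℝ C)
    (T : X → X) (hT : Set.MapsTo T C C)
    (hFne : (FixPt T C).Nonempty)
    (hqne : ∀ x ∈ C, ∀ p ∈ FixPt T C, Df f gf p (T x) ≤ Df f gf p x) :
    IsClosed (FixPt T C) ∧ Convex ℝ (FixPt T C) ∧ FixPt T C ⊆ C := by
  have hsubC : FixPt T C ⊆ C := fun x hx => hx.1
  -- a point of `C` with `Df f gf z (T z) ≤ 0` is a fixed point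
  have hfix : ∀ z ∈ C, Df f gf z (T z) ≤ 0 → T z = z := by
    intro z hz hle
    have h0 : Df f gf z (T z) = 0 :=
      le_antisymm hle (Df_nonneg f gf hconv hgf z (T z))
    exact (Df_eq_zero_iff f gf hconv hstrict hgf h0).symm
  refine ⟨?_, ?_, hsubC⟩
  · -- closedness
    apply IsSeqClosed.isClosed
    intro x p hx hxp
    have hpC : p ∈ C := hCclosed.isSeqClosed (fun n => (hx n).1) hxp
    have hcontD : ∀ w : X, Continuous (fun y => Df f gf y w) := by
      intro w
      simp only [Df]
      exact (hcont.sub continuous_const).sub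
        ((gf w).continuous.comp (continuous_id.sub continuous_const))
    have h1 : Tendsto (fun n => Df f gf (x n) (T p)) atTop (𝓝 (Df f gf p (T p))) :=
      ((hcontD (T p)).tendsto p).comp hxp
    have h2 : Tendsto (fun n => Df f gf (x n) p) atTop (𝓝 (Df f gf p p)) :=
      ((hcontD p).tendsto p).comp hxp
    have hDpp : Df f gf p p = 0 := by simp [Df]
    rw [hDpp] at h2
    have hle : Df f gf p (T p) ≤ 0 :=
      le_of_tendsto_of_tendsto' h1 h2 (fun n => hqne p hpC (x n) (hx n))
    exact ⟨hpC, hfix p hpC hle⟩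
  · -- convexity
    intro p hp q hq a b ha hb hab
    set z : X := a • p + b • q with hzdef
    have hzC : z ∈ C := hCconv hp.1 hq.1 ha hb hab
    refine ⟨hzC, ?_⟩
    have key1 := hqne z hzC p hp
    have key2 := hqne z hzC q hq
    have hv : ∀ w : X, a • (p - w) + b • (q - w) = z - w := by
      intro w
      have h1 : a • (p - w) + b • (q - w) = a • p + b • q - (a + b) • w := by
        rw [smul_sub, smul_sub, add_smul]; abel
      rw [h1, hab, one_smul, hzdef]
    have e1 : (gf (T z)) (z - T z)
        = a * gf (T z) (p - T z) + b * gf (T z) (q - T z) := by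
      rw [← hv (T z)]; simp
    have e2 : (0:ℝ) = a * gf z (p - z) + b * gf z (q - z) := by
      have : (gf z) (z - z) = a * gf z (p - z) + b * gf z (q - z) := by
        rw [← hv z]; simp
      simpa using this
    simp only [Df] at key1 key2
    apply hfix z hzC
    simp only [Df]
    have k1 := mul_le_mul_of_nonneg_left key1 ha
    have k2 := mul_le_mul_of_nonneg_left key2 hb
    have hfz : a * f (T z) + b * f (T z) = f (T z) := by rw [← add_mul, hab, one_mul]
    have hfz2 : a * f z + b * f z = f z := by rw [← add_mul, hab, one_mul]
    ring_nf at k1 k2 ⊢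
    nlinarith [k1, k2, e1, e2, hfz, hfz2]
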